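/- Let X be a nonempty compact subset of ℝ^d, let S_1, …, S_N : X → X (N ≥ 1) be contraction maps, and let C ⊆ X be compact and nonempty. Then the inhomogeneous attractor F_C equals the closure of the orbital set O. -/

import Mathlib

/-!
Both `F_C` and the closure of the orbital set `O` are closed and bounded, `O ⊆ F_C`, and `O` is
mapped into itself by every `S_i` and contains `C`. Hence every point `S_i y` of `F_C` is, up to
the contraction ratio `K < 1`, as close to `O` as `y` is, so the Hausdorff distance `h` between
`F_C` and `O` satisfies `h ≤ K h`. Being finite, `h` vanishes, i.e. `F_C = closure O`.
-/

open Metric NNReal ENNReal Set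

theorem ENNReal.eq_zero_of_le_mul_self {x r : ℝ≥0∞} (hr : r < 1) (hx : x ≠ ∞) (h : x ≤ r * x) :
    x = 0 := by
  by_contra hx0
  have hlt : r * x < x := by
    simpa only [one_mul] using (ENNReal.mul_lt_mul_iff_left hx0 hx).2 hr
  exact (h.trans_lt hlt).false

theorem LipschitzOnWith.infEDist_image_le {α β : Type*} [PseudoEMetricSpace α]
    [PseudoEMetricSpace β] {f : α → β} {K : ℝ≥0} {t s : Set α} {x : α}
    (hf : LipschitzOnWith K f t) (hx : x ∈ t) (hst : s ⊆ t) (hs : s.Nonempty) :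
    infEDist (f x) (f '' s) ≤ K * infEDist x s := by
  have : Nonempty s := hs.to_subtype
  have hmul : (K : ℝ≥0∞) * infEDist x s = ⨅ y : s, K * edist x y := by
    rw [infEDist, iInf_subtype', ENNReal.mul_iInf (by simp)]
  exact hmul ▸ le_iInf fun y =>
    (infEDist_le_edist_of_mem (mem_image_of_mem f y.2)).trans (hf hx (hst y.2))

theorem exists_lipschitzOnWith_lt_one {ι α β : Type*} [Finite ι] [PseudoEMetricSpace α]
    [PseudoEMetricSpace β] {f : ι → α → β} {s : Set α}
    (h : ∀ i, ∃ K : ℝ≥0, K < 1 ∧ LipschitzOnWith K (f i) s) :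
    ∃ K : ℝ≥0, K < 1 ∧ ∀ i, LipschitzOnWith K (f i) s := by
  choose K hK hf using h
  cases nonempty_fintype ι
  exact ⟨Finset.univ.sup K, (Finset.sup_lt_iff zero_lt_one).2 fun i _ => hK i,
    fun i => (hf i).weaken (Finset.le_sup (Finset.mem_univ i))⟩

section SelfSimilar

variable {ι α : Type*} {S : ι → α → α} {K : ℝ≥0} {F O C : Set α}

theorem hausdorffEDist_le_mul_self_of_subset_iUnion_image_union [PseudoEMetricSpace α]
    (hS : ∀ i, LipschitzOnWith K (S i) F) (hF : F ⊆ (⋃ i, S i '' F) ∪ C) (hCO : C ⊆ O)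
    (hSO : ∀ i, MapsTo (S i) O O) (hOF : O ⊆ F) (hO : O.Nonempty) :
    hausdorffEDist F O ≤ K * hausdorffEDist F O := by
  refine hausdorffEDist_le_of_infEDist (fun x hx => ?_) fun x hx => ?_
  · rcases hF hx with hx | hx
    · obtain ⟨i, y, hy, rfl⟩ := mem_iUnion.1 hx
      calc infEDist (S i y) O ≤ infEDist (S i y) (S i '' O) := infEDist_anti (hSO i).image_subset
        _ ≤ K * infEDist y O := (hS i).infEDist_image_le hy hOF hO
        _ ≤ K * hausdorffEDist F O := by gcongr; exact infEDist_le_hausdorffEDist_of_mem hy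
    · simp [infEDist_zero_of_mem (hCO hx)]
  · simp [infEDist_zero_of_mem (hOF hx)]

theorem IsClosed.eq_closure_of_subset_iUnion_image_union [PseudoMetricSpace α] (hK : K < 1)
    (hFc : IsClosed F) (hFb : Bornology.IsBounded F) (hS : ∀ i, LipschitzOnWith K (S i) F)
    (hF : F ⊆ (⋃ i, S i '' F) ∪ C) (hCO : C ⊆ O) (hSO : ∀ i, MapsTo (S i) O O) (hOF : O ⊆ F)
    (hO : O.Nonempty) :
    F = closure O := by
  have hfin : hausdorffEDist F O ≠ ∞ :=
    hausdorffEDist_ne_top_of_nonempty_of_bounded (hO.mono hOF) hO hFb (hFb.subset hOF)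
  have hzero : hausdorffEDist F O = 0 := ENNReal.eq_zero_of_le_mul_self (by exact_mod_cast hK)
    hfin (hausdorffEDist_le_mul_self_of_subset_iUnion_image_union hS hF hCO hSO hOF hO)
  rw [← hFc.closure_eq]
  exact hausdorffEDist_zero_iff_closure_eq_closure.1 hzero

end SelfSimilar

section Orbital

variable {ι α : Type*} (S : ι → α → α)

def wordMap (w : List ι) : α → α :=
  w.foldr (fun i f => S i ∘ f) id

def orbitalSet (C : Set α) : Set α :=
  C ∪ ⋃ w ∈ {w : List ι | w ≠ []}, wordMap S w '' C

variable {S} {C F : Set α}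

theorem subset_orbitalSet : C ⊆ orbitalSet S C :=
  subset_union_left

theorem mapsTo_orbitalSet (i : ι) : MapsTo (S i) (orbitalSet S C) (orbitalSet S C) := by
  rintro z (hz | hz)
  · exact Or.inr (mem_biUnion (x := [i]) (List.cons_ne_nil _ _) ⟨z, hz, rfl⟩)
  · obtain ⟨w, -, x, hx, rfl⟩ := mem_iUnion₂.1 hz
    exact Or.inr (mem_biUnion (x := i :: w) (List.cons_ne_nil _ _) ⟨x, hx, rfl⟩)

theorem mapsTo_wordMap (hSF : ∀ i, MapsTo (S i) F F) (w : List ι) : MapsTo (wordMap S w) F F := by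
  induction w with
  | nil => exact mapsTo_id F
  | cons i w ih => exact (hSF i).comp ih

theorem orbitalSet_subset (hCF : C ⊆ F) (hSF : ∀ i, MapsTo (S i) F F) : orbitalSet S C ⊆ F :=
  union_subset hCF <| iUnion₂_subset fun w _ => ((mapsTo_wordMap hSF w).mono_left hCF).image_subset

end Orbital

theorem inhomogeneous_attractor_eq_closure_orbital_general
    {d : ℕ} (X : Set (EuclideanSpace ℝ (Fin d)))
    (N : ℕ)
    (S : Fin N → EuclideanSpace ℝ (Fin d) → EuclideanSpace ℝ (Fin d))
    (hcontr : ∀ i, ∃ c : ℝ, 0 < c ∧ c < 1 ∧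
      ∀ x ∈ X, ∀ y ∈ X, dist (S i x) (S i y) ≤ c * dist x y)
    (C : Set (EuclideanSpace ℝ (Fin d))) (hCne : C.Nonempty)
    (FC : Set (EuclideanSpace ℝ (Fin d)))
    (hFC : FC.Nonempty ∧ IsCompact FC ∧ FC ⊆ X ∧ FC = (⋃ i, S i '' FC) ∪ C) :
    FC = closure (C ∪ ⋃ w ∈ {w : List (Fin N) | w ≠ []},
      (w.foldr (fun i f => S i ∘ f) id) '' C) := by
  obtain ⟨-, hFCcomp, hFCX, hFCeq⟩ := hFC
  obtain ⟨K, hK, hLip⟩ := exists_lipschitzOnWith_lt_one fun i =>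
    let ⟨c, _, hc1, hc⟩ := hcontr i
    ⟨c.toNNReal, Real.toNNReal_lt_one.2 hc1, LipschitzOnWith.of_dist_le' hc⟩
  obtain ⟨hImage, hCFC⟩ := union_subset_iff.1 hFCeq.symm.subset
  have hSFC : ∀ i, MapsTo (S i) FC FC := fun i =>
    mapsTo_iff_image_subset.2 (iUnion_subset_iff.1 hImage i)
  show FC = closure (orbitalSet S C)
  exact hFCcomp.isClosed.eq_closure_of_subset_iUnion_image_union hK
    hFCcomp.isBounded (fun i => (hLip i).mono hFCX) hFCeq.subset subset_orbitalSet
    mapsTo_orbitalSet (orbitalSet_subset hCFC hSFC) (hCne.mono subset_orbitalSet)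

/-- For a nonempty compact condensation set `C`, the inhomogeneous attractor `F_C`
equals the closure of the orbital set
`O = C ∪ ⋃_{k ≥ 1} ⋃_{i₁,…,i_k} S_{i₁} ∘ ⋯ ∘ S_{i_k} (C)`
(finite nonempty words are encoded as nonempty lists over `Fin N`, and a word
`w = [i₁, …, i_k]` acts by `S_{i₁} ∘ ⋯ ∘ S_{i_k}`). -/
theorem inhomogeneous_attractor_eq_closure_orbital
    {d : ℕ} (X : Set (EuclideanSpace ℝ (Fin d))) (hXcomp : IsCompact X) (hXne : X.Nonempty)
    (N : ℕ) (hN : 1 ≤ N)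
    (S : Fin N → EuclideanSpace ℝ (Fin d) → EuclideanSpace ℝ (Fin d))
    (hS : ∀ i, Set.MapsTo (S i) X X)
    (hcontr : ∀ i, ∃ c : ℝ, 0 < c ∧ c < 1 ∧
      ∀ x ∈ X, ∀ y ∈ X, dist (S i x) (S i y) ≤ c * dist x y)
    (C : Set (EuclideanSpace ℝ (Fin d))) (hC : IsCompact C) (hCX : C ⊆ X) (hCne : C.Nonempty)
    (FC : Set (EuclideanSpace ℝ (Fin d)))
    (hFC : FC.Nonempty ∧ IsCompact FC ∧ FC ⊆ X ∧ FC = (⋃ i, S i '' FC) ∪ C) :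
    FC = closure (C ∪ ⋃ w ∈ {w : List (Fin N) | w ≠ []},
      (w.foldr (fun i f => S i ∘ f) id) '' C) :=
  inhomogeneous_attractor_eq_closure_orbital_general X N S hcontr C hCne FC hFC
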